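/- Let (X,φ) be an expansive dynamical system with adapted metric. There exists ε₀ > 0 such that for all 0 < ε, ε′ ≤ ε₀ and all x ∈ X, the point (x,x) is in the interior of D_ε if and only if it is in the interior of D_{ε′}. -/

import Mathlib

open Filter Topology Set

namespace Paper

variable {X : Type*} [MetricSpace X] [CompactSpace X]

/-- The `n`-th iterate (for `n : ℤ`) of the homeomorphism `φ`. -/
def It (φ : X ≃ₜ X) (n : ℤ) : X → X := fun x => (φ.toEquiv ^ n) x

/-- The local stable set `Xˢ(x, ε)`. -/
def locS (φ : X ≃ₜ X) (x : X) (ε : ℝ) : Set X :=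
  {y | ∀ n : ℕ, dist (It φ n x) (It φ n y) ≤ ε}

/-- The local unstable set `Xᵘ(x, ε)`. -/
def locU (φ : X ≃ₜ X) (x : X) (ε : ℝ) : Set X :=
  {y | ∀ n : ℕ, dist (It φ (-(n : ℤ)) x) (It φ (-(n : ℤ)) y) ≤ ε}

/-- The set `D_ε` on which the bracket is defined. -/
def Dset (φ : X ≃ₜ X) (ε : ℝ) : Set (X × X) :=
  {p | (locS φ p.1 ε ∩ locU φ p.2 ε).Nonempty}

/-- `(X, φ)` is expansive with expansiveness constant `εX`. -/
def IsExpansive (φ : X ≃ₜ X) (εX : ℝ) : Prop :=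
  0 < εX ∧ ∀ x y : X, (∀ n : ℤ, dist (It φ n x) (It φ n y) ≤ εX) → x = y

/-- The metric is adapted (Fried), with constants `η` and `lam`. -/
def IsAdapted (φ : X ≃ₜ X) (η lam : ℝ) : Prop :=
  0 < η ∧ 0 < lam ∧ lam < 1 ∧
    (∀ x y : X, y ∈ locS φ x η → dist (φ x) (φ y) ≤ lam * dist x y) ∧
    (∀ x y : X, y ∈ locU φ x η → dist (φ.symm x) (φ.symm y) ≤ lam * dist x y)

/-- `p` is a periodic point of `φ`. -/
def IsPeriodic (φ : X ≃ₜ X) (p : X) : Prop :=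
  ∃ n : ℕ, 1 ≤ n ∧ It φ n p = p

/-- `x` is a synchronizing point: `(x, x)` is in the interior of `D_ε` for
some `0 < ε ≤ ε₀`. -/
def IsSyncPt (φ : X ≃ₜ X) (ε₀ : ℝ) (x : X) : Prop :=
  ∃ ε : ℝ, 0 < ε ∧ ε ≤ ε₀ ∧ (x, x) ∈ interior (Dset φ ε)

/-- `(X, φ)` is irreducible. -/
def Irred (φ : X ≃ₜ X) : Prop :=
  ∀ U V : Set X, IsOpen U → IsOpen V → U.Nonempty → V.Nonempty →
    ∃ n : ℕ, 0 < n ∧ (It φ n '' U ∩ V).Nonempty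

/-- `(X, φ)` is mixing. -/
def Mixing (φ : X ≃ₜ X) : Prop :=
  ∀ U V : Set X, IsOpen U → IsOpen V → U.Nonempty → V.Nonempty →
    ∃ N : ℕ, ∀ n : ℕ, N ≤ n → (It φ n '' U ∩ V).Nonempty

/-- Every point of `(X, φ)` is non-wandering. -/
def NonWandering (φ : X ≃ₜ X) : Prop :=
  ∀ x : X, ∀ U ∈ 𝓝 x, ∃ n : ℕ, 0 < n ∧ (It φ n '' U ∩ U).Nonempty

/-- Stable equivalence `x ∼ₛ y`. -/
def StableEq (φ : X ≃ₜ X) (x y : X) : Prop :=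
  Tendsto (fun n : ℕ => dist (It φ n x) (It φ n y)) atTop (𝓝 0)

/-- Unstable equivalence `x ∼ᵤ y`. -/
def UnstableEq (φ : X ≃ₜ X) (x y : X) : Prop :=
  Tendsto (fun n : ℕ => dist (It φ (-(n : ℤ)) x) (It φ (-(n : ℤ)) y)) atTop (𝓝 0)

/-- Local conjugacy `x ∼_lc y`: a homeomorphism `γ : U → V` of open
neighborhoods with `γ x = y` and `sup_{z ∈ U} d(φⁿ z, φⁿ (γ z)) → 0` as
`n → ±∞`. -/
def LocConj (φ : X ≃ₜ X) (x y : X) : Prop :=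
  ∃ (U V : Set X) (γ γinv : X → X),
    IsOpen U ∧ IsOpen V ∧ x ∈ U ∧ y ∈ V ∧ γ x = y ∧
    Set.MapsTo γ U V ∧ Set.MapsTo γinv V U ∧
    (∀ z ∈ U, γinv (γ z) = z) ∧ (∀ w ∈ V, γ (γinv w) = w) ∧
    ContinuousOn γ U ∧ ContinuousOn γinv V ∧
    (∀ ε : ℝ, 0 < ε → ∃ N : ℕ, ∀ n : ℤ, (N : ℤ) ≤ |n| → ∀ z ∈ U,
      dist (It φ n z) (It φ n (γ z)) ≤ ε)

/-- Stable local conjugacy `x ∼_lcs y`: a homeomorphism of `Xᵘ(x, δ)` onto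
its image in `Xᵘ(y, δ')` sending `x` to `y`, uniformly asymptotic in forward
time. -/
def StableLC (φ : X ≃ₜ X) (x y : X) : Prop :=
  ∃ (δ δ' : ℝ) (γ : X → X), 0 < δ ∧ 0 < δ' ∧
    Set.MapsTo γ (locU φ x δ) (locU φ y δ') ∧
    Set.InjOn γ (locU φ x δ) ∧ ContinuousOn γ (locU φ x δ) ∧ γ x = y ∧
    (∀ ε : ℝ, 0 < ε → ∃ N : ℕ, ∀ n : ℕ, N ≤ n → ∀ z ∈ locU φ x δ,
      dist (It φ n z) (It φ n (γ z)) ≤ ε)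

/-- Unstable local conjugacy `x ∼_lcu y`: a homeomorphism of `Xˢ(x, δ)` onto
its image in `Xˢ(y, δ')` sending `x` to `y`, uniformly asymptotic in backward
time. -/
def UnstableLC (φ : X ≃ₜ X) (x y : X) : Prop :=
  ∃ (δ δ' : ℝ) (γ : X → X), 0 < δ ∧ 0 < δ' ∧
    Set.MapsTo γ (locS φ x δ) (locS φ y δ') ∧
    Set.InjOn γ (locS φ x δ) ∧ ContinuousOn γ (locS φ x δ) ∧ γ x = y ∧
    (∀ ε : ℝ, 0 < ε → ∃ N : ℕ, ∀ n : ℕ, N ≤ n → ∀ z ∈ locS φ x δ,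
      dist (It φ (-(n : ℤ)) z) (It φ (-(n : ℤ)) (γ z)) ≤ ε)

end Paper

/-!
For `ε ≤ ε_X`, expansiveness and compactness make the bracket continuous on the diagonal: when
`(p, q) → (x, x)`, every point of `Xˢ(p, ε) ∩ Xᵘ(q, ε)` tends to `x`, since a limit point `z`
has its whole orbit `ε`-close to that of `x`. For `ε ≤ η` the adapted metric gives
`d(φⁿ p, φⁿ z) ≤ d(p, z)` for `n ≥ 0` when `z ∈ Xˢ(p, ε)`, and dually in backward time. So if
`D_ε` is a neighbourhood of `(x, x)`, the bracket points of nearby pairs `(p, q)` lie in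
`Xˢ(p, ε') ∩ Xᵘ(q, ε')` for any prescribed `ε' > 0`, and `D_{ε'}` is a neighbourhood of `(x, x)`
too. This gives the claim with `ε₀ = min η ε_X`.
-/

namespace Paper

section General

variable {X : Type*} [MetricSpace X] (φ : X ≃ₜ X)

def toPermHom : (X ≃ₜ X) →* Equiv.Perm X where
  toFun := Homeomorph.toEquiv
  map_one' := rfl
  map_mul' _ _ := rfl

theorem It_eq_coe_zpow (n : ℤ) : It φ n = ⇑(φ ^ n) := by
  ext x
  exact congrArg (· x) (map_zpow toPermHom φ n).symm

theorem It_It (m n : ℤ) (x : X) : It φ m (It φ n x) = It φ (m + n) x := by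
  simp only [It_eq_coe_zpow, zpow_add, Homeomorph.mul_apply]

theorem It_zero (x : X) : It φ 0 x = x := by
  simp only [It_eq_coe_zpow, zpow_zero, Homeomorph.one_apply]

theorem It_natCast_succ (n : ℕ) (x : X) : It φ (n + 1 : ℕ) x = φ (It φ n x) := by
  rw [Nat.cast_succ, add_comm, ← It_It, It_eq_coe_zpow φ 1, zpow_one]

theorem continuous_It (n : ℤ) : Continuous (It φ n) := by
  rw [It_eq_coe_zpow]
  exact (φ ^ n).continuous

theorem It_symm (n : ℤ) : It φ.symm n = It φ (-n) := by
  rw [It_eq_coe_zpow, It_eq_coe_zpow, zpow_neg, ← inv_zpow]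
  rfl

theorem locU_eq_locS_symm (x : X) (ε : ℝ) : locU φ x ε = locS φ.symm x ε := by
  simp only [locU, locS, It_symm]

theorem locS_mono (x : X) {ε ε' : ℝ} (h : ε ≤ ε') : locS φ x ε ⊆ locS φ x ε' :=
  fun _ hz n => (hz n).trans h

theorem locU_mono (x : X) {ε ε' : ℝ} (h : ε ≤ ε') : locU φ x ε ⊆ locU φ x ε' :=
  fun _ hz n => (hz n).trans h

theorem It_mem_locS_It {p z : X} {ε : ℝ} (hz : z ∈ locS φ p ε) (n : ℕ) :
    It φ n z ∈ locS φ (It φ n p) ε := fun m => by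
  simpa only [It_It, Nat.cast_add] using hz (m + n)

theorem isClosed_setOf_mem_locS (ε : ℝ) : IsClosed {w : X × X | w.2 ∈ locS φ w.1 ε} := by
  change IsClosed {w : X × X | ∀ n : ℕ, dist (It φ n w.1) (It φ n w.2) ≤ ε}
  rw [ofPred_forall]
  exact isClosed_iInter fun n =>
    isClosed_le ((continuous_It φ n).comp continuous_fst |>.dist
      ((continuous_It φ n).comp continuous_snd)) continuous_const

theorem isClosed_setOf_mem_locU (ε : ℝ) : IsClosed {w : X × X | w.2 ∈ locU φ w.1 ε} := by
  simpa only [locU_eq_locS_symm] using isClosed_setOf_mem_locS φ.symm ε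

theorem mem_locS_dist_of_contracting {η lam : ℝ} (hlam : lam ≤ 1)
    (hcontr : ∀ x y : X, y ∈ locS φ x η → dist (φ x) (φ y) ≤ lam * dist x y)
    {p z : X} (hz : z ∈ locS φ p η) : z ∈ locS φ p (dist p z) := by
  have hanti : Antitone fun n : ℕ => dist (It φ n p) (It φ n z) := by
    refine antitone_nat_of_succ_le fun n => ?_
    rw [It_natCast_succ, It_natCast_succ]
    calc dist (φ (It φ n p)) (φ (It φ n z))
        ≤ lam * dist (It φ n p) (It φ n z) := hcontr _ _ (It_mem_locS_It φ hz n)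
      _ ≤ dist (It φ n p) (It φ n z) := mul_le_of_le_one_left dist_nonneg hlam
  intro n
  simpa only [Nat.cast_zero, It_zero] using hanti (Nat.zero_le n)

theorem IsAdapted.mem_locS_dist {η lam : ℝ} (had : IsAdapted φ η lam) {p z : X}
    (hz : z ∈ locS φ p η) : z ∈ locS φ p (dist p z) :=
  mem_locS_dist_of_contracting φ had.2.2.1.le had.2.2.2.1 hz

theorem IsAdapted.mem_locU_dist {η lam : ℝ} (had : IsAdapted φ η lam) {p z : X}
    (hz : z ∈ locU φ p η) : z ∈ locU φ p (dist p z) := by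
  rw [locU_eq_locS_symm] at hz ⊢
  exact mem_locS_dist_of_contracting φ.symm had.2.2.1.le
    (fun x y hy => had.2.2.2.2 x y ((locU_eq_locS_symm φ x η).symm ▸ hy)) hz

theorem IsExpansive.eq_of_mem_locS_of_mem_locU {εX ε : ℝ} (hexp : IsExpansive φ εX)
    (hε : ε ≤ εX) {x z : X} (hs : z ∈ locS φ x ε) (hu : z ∈ locU φ x ε) : z = x := by
  refine (hexp.2 x z fun n => ?_).symm
  obtain ⟨k, rfl | rfl⟩ := n.eq_nat_or_neg
  exacts [(hs k).trans hε, (hu k).trans hε]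

end General

variable {X : Type*} [MetricSpace X] [CompactSpace X]

theorem IsExpansive.eventually_dist_lt_of_mem_locS_of_mem_locU (φ : X ≃ₜ X) {εX ε : ℝ}
    (hexp : IsExpansive φ εX) (hε : ε ≤ εX) (x : X) {c : ℝ} (hc : 0 < c) :
    ∀ᶠ pq in 𝓝 (x, x), ∀ z, z ∈ locS φ pq.1 ε → z ∈ locU φ pq.2 ε → dist x z < c := by
  set B : Set ((X × X) × X) :=
    {w | w.2 ∈ locS φ w.1.1 ε} ∩ {w | w.2 ∈ locU φ w.1.2 ε} ∩ {w | c ≤ dist x w.2}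
  have hB : IsClosed B :=
    (((isClosed_setOf_mem_locS φ ε).preimage (f := fun w : (X × X) × X => (w.1.1, w.2))
      (by fun_prop)).inter
      ((isClosed_setOf_mem_locU φ ε).preimage (f := fun w : (X × X) × X => (w.1.2, w.2))
        (by fun_prop))).inter
      (isClosed_le continuous_const (continuous_const.dist continuous_snd))
  have hx : (x, x) ∉ Prod.fst '' B := by
    rintro ⟨⟨_, z⟩, ⟨⟨hs, hu⟩, hcz⟩, rfl⟩
    have hzx : z = x := hexp.eq_of_mem_locS_of_mem_locU φ hε hs hu
    have hcz : c ≤ dist x z := hcz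
    rw [hzx, dist_self] at hcz
    exact hc.not_ge hcz
  filter_upwards [(isClosedMap_fst_of_compactSpace B hB).isOpen_compl.mem_nhds hx]
    with pq hpq z hs hu
  exact lt_of_not_ge fun hcz => hpq ⟨(pq, z), ⟨⟨hs, hu⟩, hcz⟩, rfl⟩

theorem mem_interior_Dset_of_mem_interior_Dset (φ : X ≃ₜ X) {εX η lam ε : ℝ}
    (hexp : IsExpansive φ εX) (had : IsAdapted φ η lam) (hεη : ε ≤ η) (hεX : ε ≤ εX) {x : X}
    (hx : (x, x) ∈ interior (Dset φ ε)) {ε' : ℝ} (hε' : 0 < ε') :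
    (x, x) ∈ interior (Dset φ ε') := by
  rw [mem_interior_iff_mem_nhds] at hx ⊢
  have hball := Metric.ball_mem_nhds x (half_pos hε')
  filter_upwards [hx, hexp.eventually_dist_lt_of_mem_locS_of_mem_locU φ hεX x (half_pos hε'),
    continuous_fst.continuousAt.preimage_mem_nhds hball,
    continuous_snd.continuousAt.preimage_mem_nhds hball]
    with pq ⟨z, hs, hu⟩ hclose hp hq
  have hxz := hclose z hs hu
  rw [mem_preimage, Metric.mem_ball] at hp hq
  refine ⟨z, locS_mono φ _ ?_ (had.mem_locS_dist φ (locS_mono φ _ hεη hs)),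
    locU_mono φ _ ?_ (had.mem_locU_dist φ (locU_mono φ _ hεη hu))⟩
  · linarith [dist_triangle pq.1 x z]
  · linarith [dist_triangle pq.2 x z]

/-- there is `ε₀ > 0` such that membership of `(x,x)` in the
interior of `D_ε` is independent of `ε ∈ (0, ε₀]`. -/
theorem exists_eps0_interior_Dset_indep (φ : X ≃ₜ X) (εX η lam : ℝ)
    (hexp : IsExpansive φ εX) (had : IsAdapted φ η lam) :
    ∃ ε₀ : ℝ, 0 < ε₀ ∧ ∀ ε ε' : ℝ, 0 < ε → ε ≤ ε₀ → 0 < ε' → ε' ≤ ε₀ →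
      ∀ x : X, ((x, x) ∈ interior (Dset φ ε) ↔ (x, x) ∈ interior (Dset φ ε')) := by
  refine ⟨min η εX, lt_min had.1 hexp.1, fun ε ε' hε hε₀ hε' hε'₀ x =>
    ⟨fun hx => ?_, fun hx => ?_⟩⟩
  · exact mem_interior_Dset_of_mem_interior_Dset φ hexp had (le_of_le_min_left hε₀)
      (le_of_le_min_right hε₀) hx hε'
  · exact mem_interior_Dset_of_mem_interior_Dset φ hexp had (le_of_le_min_left hε'₀)
      (le_of_le_min_right hε'₀) hx hε

end Paper
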